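/- Let 𝒟 be the basic Weitzenböck derivation on the polynomial ring ℚ[x_0, x_1, …, x_{2n}] (the ℚ-derivation with 𝒟(x_0) = 0 and 𝒟(x_i) = i·x_{i-1} for 1 ≤ i ≤ 2n). Then 𝒟 annihilates the catalecticant: 𝒟(det((x_{j+k})_{0 ≤ j,k ≤ n})) = 0. -/

import Mathlib

/-!
By Jacobi's formula `D (det H) = tr (D(H) * adj H)`. On the Hankel matrix `H = (x_{j+k})` the
derivation acts as `D(H) = L H + H Lᵀ`, where `L` is the weighted lowering shift `L_{j,j-1} = j`,
because `(j + k) x_{j+k-1} = j x_{(j-1)+k} + k x_{j+(k-1)}`. Since `H adj H = adj H H = det H`,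
this gives `D (det H) = (tr L + tr Lᵀ) det H`, and `L` is strictly lower triangular.
-/

open MvPolynomial Matrix

theorem Derivation.map_prod {R A M : Type*} [CommSemiring R] [CommSemiring A] [Algebra R A]
    [AddCommMonoid M] [Module A M] [Module R M] (D : Derivation R A M) {ι : Type*}
    [DecidableEq ι] (s : Finset ι) (f : ι → A) :
    D (∏ i ∈ s, f i) = ∑ i ∈ s, (∏ j ∈ s.erase i, f j) • D (f i) := by
  induction s using Finset.induction_on with
  | empty => simp
  | insert a s ha ih =>
    rw [Finset.prod_insert ha, Derivation.leibniz, ih, Finset.smul_sum, Finset.sum_insert ha,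
      Finset.erase_insert ha, add_comm]
    congr 1
    refine Finset.sum_congr rfl fun i hi => ?_
    rw [Finset.erase_insert_of_ne (ne_of_mem_of_not_mem hi ha).symm,
      Finset.prod_insert (fun h => ha (Finset.mem_of_mem_erase h)), mul_smul]

namespace Matrix

theorem det_updateRow_eq_vecMul_adjugate {n A : Type*} [Fintype n] [DecidableEq n]
    [CommRing A] (M : Matrix n n A) (i : n) (v : n → A) :
    (M.updateRow i v).det = (v ᵥ* adjugate M) i := by
  rw [← det_transpose, ← updateCol_transpose, ← cramer_apply, cramer_eq_adjugate_mulVec,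
    ← adjugate_transpose, mulVec_transpose]

variable {A : Type*}

def hankel (m : ℕ) (f : ℕ → A) : Matrix (Fin m) (Fin m) A :=
  of fun j k => f (j + k)

def weightedShift [NatCast A] [Zero A] (m : ℕ) : Matrix (Fin m) (Fin m) A :=
  of fun i j => if (i : ℕ) = j + 1 then (i : A) else 0

theorem hankel_transpose (m : ℕ) (f : ℕ → A) : (hankel m f)ᵀ = hankel m f := by
  ext j k
  simp [hankel, add_comm]

theorem trace_weightedShift [AddCommMonoid A] [NatCast A] (m : ℕ) :
    trace (weightedShift m : Matrix (Fin m) (Fin m) A) = 0 := by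
  simp [trace, weightedShift]

theorem weightedShift_mul_hankel [NonAssocSemiring A] (m : ℕ) (f : ℕ → A) :
    weightedShift m * hankel m f = of fun j k : Fin m => ((j : ℕ) : A) * f (j + k - 1) := by
  ext j k
  obtain ⟨_ | i, hj⟩ := j
  · simp [weightedShift, mul_apply]
  · rw [mul_apply, Finset.sum_eq_single ⟨i, by omega⟩]
    · simp [weightedShift, hankel, Nat.add_right_comm]
    · intro l _ hl
      rw [weightedShift, of_apply, if_neg fun h => hl (Fin.ext (by simp only at h ⊢; omega)),
        zero_mul]
    · simp

theorem hankel_mul_weightedShift_transpose [CommSemiring A] (m : ℕ) (f : ℕ → A) :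
    hankel m f * (weightedShift m)ᵀ = of fun j k : Fin m => ((k : ℕ) : A) * f (j + k - 1) := by
  rw [← hankel_transpose, ← transpose_mul, weightedShift_mul_hankel]
  ext j k
  simp [add_comm]

end Matrix

namespace Derivation

variable {R A : Type*} [CommSemiring R] [CommRing A] [Algebra R A]

section

variable {n : Type*} [Fintype n] [DecidableEq n]

theorem map_det_eq_sum_det_updateRow (D : Derivation R A A) (M : Matrix n n A) :
    D M.det = ∑ i, (M.updateRow i fun k => D (M i k)).det := by
  simp only [det_apply, map_sum]
  rw [Finset.sum_comm]
  refine Finset.sum_congr rfl fun σ _ => ?_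
  rw [Units.smul_def, map_zsmul, map_prod, ← Finset.smul_sum, ← Units.smul_def]
  congr 1
  rw [← Equiv.sum_comp σ fun i => ∏ j, (M.updateRow i fun k => D (M i k)) (σ j) j]
  refine Finset.sum_congr rfl fun i _ => ?_
  rw [← Finset.mul_prod_erase _ _ (Finset.mem_univ i), mul_comm, smul_eq_mul]
  congr 1
  · refine Finset.prod_congr rfl fun j hj => ?_
    rw [updateRow_ne (σ.injective.ne (Finset.ne_of_mem_erase hj))]
  · rw [updateRow_self]

theorem map_det (D : Derivation R A A) (M : Matrix n n A) :
    D M.det = trace (M.map D * adjugate M) := by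
  simp only [map_det_eq_sum_det_updateRow, det_updateRow_eq_vecMul_adjugate]
  rfl

theorem map_det_eq_trace_add_trace_mul_det (D : Derivation R A A) {M L N : Matrix n n A}
    (h : M.map D = L * M + M * N) : D M.det = (trace L + trace N) * M.det :=
  calc D M.det = trace (L * (M * adjugate M)) + trace (N * (adjugate M * M)) := by
        rw [map_det, h, Matrix.add_mul, trace_add, Matrix.mul_assoc, Matrix.mul_assoc,
          trace_mul_comm M, Matrix.mul_assoc]
    _ = (trace L + trace N) * M.det := by
        simp only [mul_adjugate, adjugate_mul, Matrix.mul_smul, Matrix.mul_one, trace_smul,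
          smul_eq_mul]
        ring

end

theorem map_det_hankel_eq_zero (D : Derivation R A A) (n : ℕ) (f : ℕ → A)
    (hf : ∀ i ≤ 2 * n, D (f i) = i • f (i - 1)) : D (hankel (n + 1) f).det = 0 := by
  have hmap : (hankel (n + 1) f).map D =
      weightedShift (n + 1) * hankel (n + 1) f + hankel (n + 1) f * (weightedShift (n + 1))ᵀ := by
    rw [weightedShift_mul_hankel, hankel_mul_weightedShift_transpose]
    ext j k
    simp [hankel, hf (j + k) (by omega), add_mul, nsmul_eq_mul]
  simp [map_det_eq_trace_add_trace_mul_det D hmap, trace_weightedShift]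

end Derivation

theorem weitzenbock_catalecticant (n : ℕ)
    (D : Derivation ℚ (MvPolynomial (Fin (2 * n + 1)) ℚ) (MvPolynomial (Fin (2 * n + 1)) ℚ))
    (h0 : D (X (⟨0, by omega⟩ : Fin (2 * n + 1))) = 0)
    (h : ∀ i : Fin (2 * n + 1), 1 ≤ (i : ℕ) →
      D (X i) = ((i : ℕ) : ℚ) • X (⟨(i : ℕ) - 1, by have := i.isLt; omega⟩ : Fin (2 * n + 1))) :
    D ((Matrix.of fun j k : Fin (n + 1) =>
        X (⟨(j : ℕ) + (k : ℕ), by have := j.isLt; have := k.isLt; omega⟩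
          : Fin (2 * n + 1))).det) = 0 := by
  set x : ℕ → MvPolynomial (Fin (2 * n + 1)) ℚ :=
    fun i => if hi : i < 2 * n + 1 then X ⟨i, hi⟩ else 0
  have hx : ∀ i (hi : i < 2 * n + 1), x i = X ⟨i, hi⟩ := fun i hi => dif_pos hi
  have hankel_x : (Matrix.of fun j k : Fin (n + 1) =>
      X (⟨(j : ℕ) + (k : ℕ), by omega⟩ : Fin (2 * n + 1))) = hankel (n + 1) x := by
    ext j k
    rw [hankel, of_apply, of_apply, hx]
  rw [hankel_x]
  refine D.map_det_hankel_eq_zero n x fun i hi => ?_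
  rcases Nat.eq_zero_or_pos i with rfl | hpos
  · rw [hx 0 (by omega), h0, zero_smul]
  · rw [hx i (by omega), hx (i - 1) (by omega), h ⟨i, by omega⟩ hpos, Nat.cast_smul_eq_nsmul]
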